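/- Let n ≥ 2 be an integer such that 4 n^{1/4} √(π log n) < n, and set δₙ = 1/(4 n^{1/4} √(π log n)). Let X₁,…,Xₙ be real random variables with common CDF F, let F̂ be their empirical distribution function, and let F̃ be the Winsorized empirical distribution function with truncation level δₙ. Let M > 0. Then (pointwise, for every realization of the sample) for every t ∈ ℝ with F(t) ∈ (0,1) and |Φ⁻¹(F(t))| ≤ √(M log n), one has |Φ⁻¹(F̃(t)) − Φ⁻¹(F(t))| < √(2(M+2) log n). -/

import Mathlib

open MeasureTheory ProbabilityTheory Set

/-- The standard normal cumulative distribution function Φ. -/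
noncomputable def stdNormalCDF (t : ℝ) : ℝ := ((gaussianReal 0 1) (Iic t)).toReal

/-- The standard normal quantile function Φ⁻¹ : (0,1) → ℝ (an inverse of Φ). -/
noncomputable def stdNormalQuantile : ℝ → ℝ := Function.invFun stdNormalCDF

section AuxLemmas

open Filter
open scoped Topology

lemma aux_measure (s : Set ℝ) :
    ((gaussianReal 0 1) s).toReal = ∫ x in s, gaussianPDFReal 0 1 x := by
  rw [gaussianReal_apply_eq_integral 0 one_ne_zero s, ENNReal.toReal_ofReal]
  exact integral_nonneg fun x => gaussianPDFReal_nonneg _ _ _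

lemma snc_add {a b : ℝ} (hab : a ≤ b) :
    stdNormalCDF b = stdNormalCDF a + ∫ x in Ioc a b, gaussianPDFReal 0 1 x := by
  have h : Iic a ∪ Ioc a b = Iic b := Iic_union_Ioc_eq_Iic hab
  unfold stdNormalCDF
  rw [← h, measure_union (Iic_disjoint_Ioc le_rfl) measurableSet_Ioc,
    ENNReal.toReal_add (measure_ne_top _ _) (measure_ne_top _ _), aux_measure (Ioc a b)]

lemma snc_strictMono : StrictMono stdNormalCDF := by
  intro a b hab
  rw [snc_add hab.le]
  have hpos : 0 < ∫ x in Ioc a b, gaussianPDFReal 0 1 x := by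
    rw [← intervalIntegral.integral_of_le hab.le]
    exact intervalIntegral.intervalIntegral_pos_of_pos_on
      ((integrable_gaussianPDFReal 0 1).intervalIntegrable)
      (fun x _ => gaussianPDFReal_pos _ _ _ one_ne_zero) hab
  linarith

lemma snc_continuous : Continuous stdNormalCDF := by
  have h : stdNormalCDF = fun t => stdNormalCDF 0 + ∫ x in (0:ℝ)..t, gaussianPDFReal 0 1 x := by
    funext t
    rcases le_total 0 t with h | h
    · rw [snc_add h, intervalIntegral.integral_of_le h]
    · have h0 := snc_add h
      rw [intervalIntegral.integral_symm, intervalIntegral.integral_of_le h]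
      linarith
  rw [h]
  exact continuous_const.add ((integrable_gaussianPDFReal 0 1).continuous_primitive 0)

lemma snc_surj {p : ℝ} (hp0 : 0 < p) (hp1 : p < 1) : ∃ x, stdNormalCDF x = p := by
  have hc : stdNormalCDF = cdf (gaussianReal 0 1) := funext fun t => (cdf_eq_real _ t).symm
  have h1 : ∀ᶠ b in atTop, p < stdNormalCDF b := by
    rw [hc]; exact (tendsto_cdf_atTop _).eventually (eventually_gt_nhds hp1)
  have h0 : ∀ᶠ a in atBot, stdNormalCDF a < p := by
    rw [hc]; exact (tendsto_cdf_atBot _).eventually (eventually_lt_nhds hp0)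
  obtain ⟨b, hb⟩ := h1.exists
  obtain ⟨a, ha⟩ := h0.exists
  have hab : a ≤ b := by
    rcases le_total a b with h | h
    · exact h
    · have := snc_strictMono.monotone h
      linarith
  obtain ⟨x, _, hx⟩ := intermediate_value_Icc hab snc_continuous.continuousOn ⟨ha.le, hb.le⟩
  exact ⟨x, hx⟩

lemma snq_cdf (x : ℝ) : stdNormalQuantile (stdNormalCDF x) = x :=
  Function.leftInverse_invFun snc_strictMono.injective x

lemma snc_one_sub (y : ℝ) :
    1 - stdNormalCDF y = ((gaussianReal 0 1) (Ioi y)).toReal := by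
  have key : stdNormalCDF y + ((gaussianReal 0 1) (Ioi y)).toReal = 1 := by
    unfold stdNormalCDF
    rw [← ENNReal.toReal_add (measure_ne_top _ _) (measure_ne_top _ _),
      ← measure_union (Iic_disjoint_Ioi le_rfl) measurableSet_Ioi, Iic_union_Ioi, measure_univ,
      ENNReal.toReal_one]
  linarith

lemma gpdf_eq (x : ℝ) :
    gaussianPDFReal 0 1 x = (Real.sqrt (2*Real.pi))⁻¹ * Real.exp (-x^2/2) := by
  simp [gaussianPDFReal]

lemma snc_neg (x : ℝ) : stdNormalCDF (-x) = 1 - stdNormalCDF x := by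
  have hmap : (gaussianReal 0 1).map (fun y => (-1 : ℝ) * y) = gaussianReal 0 1 := by
    rw [gaussianReal_map_const_mul]; norm_num
  have h1 : (gaussianReal 0 1) (Iic (-x)) = (gaussianReal 0 1) (Ici x) := by
    conv_rhs => rw [← hmap]
    rw [Measure.map_apply (measurable_const_mul _) measurableSet_Ici]
    congr 1
    ext y
    simp only [mem_Iic, mem_preimage, mem_Ici]
    constructor <;> intro h <;> nlinarith
  have h0 : (gaussianReal 0 1) {x} = 0 :=
    gaussianReal_absolutelyContinuous 0 one_ne_zero (Real.volume_singleton)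
  have h2 : (gaussianReal 0 1) (Ici x) = (gaussianReal 0 1) (Ioi x) := by
    have hset : Ici x = {x} ∪ Ioi x := by
      ext y; simp only [mem_Ici, mem_union, mem_singleton_iff, mem_Ioi]
      constructor
      · intro h; rcases eq_or_lt_of_le h with h | h
        · exact Or.inl h.symm
        · exact Or.inr h
      · rintro (rfl | h) <;> [exact le_rfl; exact h.le]
    apply le_antisymm
    · calc (gaussianReal 0 1) (Ici x) ≤ (gaussianReal 0 1) {x} + (gaussianReal 0 1) (Ioi x) := by
            rw [hset]; exact measure_union_le _ _
        _ = (gaussianReal 0 1) (Ioi x) := by rw [h0, zero_add]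
    · exact measure_mono Ioi_subset_Ici_self
  rw [snc_one_sub x, show stdNormalCDF (-x) = ((gaussianReal 0 1) (Iic (-x))).toReal from rfl,
    h1, h2]

lemma int_x_exp : Integrable (fun x : ℝ => x * Real.exp (-x^2/2)) := by
  have h := integrable_mul_exp_neg_mul_sq (show (0:ℝ) < 1/2 by norm_num)
  have heq : (fun x : ℝ => x * Real.exp (-(1/2)*x^2)) = fun x : ℝ => x * Real.exp (-x^2/2) := by
    funext x; ring_nf
  rwa [heq] at h

lemma integral_x_exp (y : ℝ) :
    ∫ x in Ioi y, x * Real.exp (-x^2/2) = Real.exp (-y^2/2) := by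
  have hderiv : ∀ x ∈ Ici y, HasDerivAt (fun x : ℝ => -Real.exp (-x^2/2))
      (x * Real.exp (-x^2/2)) x := by
    intro x _
    have h1 : HasDerivAt (fun x : ℝ => -x^2/2) (-x) x := by
      have h := ((hasDerivAt_pow 2 x).div_const 2).neg
      have he : (fun x : ℝ => -(x^2/2)) = fun x : ℝ => -x^2/2 := by funext z; ring
      rw [show (-fun x : ℝ => x^2/2) = fun x : ℝ => -x^2/2 by funext z; simp only [Pi.neg_apply]; ring] at h
      refine h.congr_deriv ?_
      norm_num
    have h2 := (h1.exp).neg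
    refine h2.congr_deriv ?_
    ring
  have htend : Tendsto (fun x : ℝ => -Real.exp (-x^2/2)) atTop (𝓝 0) := by
    have h2 : Tendsto (fun x : ℝ => -(x^2/2)) atTop atBot := by
      refine tendsto_neg_atBot_iff.mpr ?_
      exact (tendsto_pow_atTop two_ne_zero).atTop_div_const (by norm_num)
    have h3 := (Real.tendsto_exp_atBot.comp h2).neg
    simp only [Function.comp_def, neg_zero, neg_div] at h3 ⊢
    exact h3
  have h := integral_Ioi_of_hasDerivAt_of_tendsto' hderiv int_x_exp.integrableOn htend
  rw [h]; ring

lemma tail_bound {y : ℝ} (hy : 0 < y) :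
    1 - stdNormalCDF y ≤ (Real.sqrt (2*Real.pi))⁻¹ * (Real.exp (-y^2/2) / y) := by
  rw [snc_one_sub, aux_measure]
  have hc : (0:ℝ) ≤ (Real.sqrt (2*Real.pi))⁻¹ := inv_nonneg.mpr (Real.sqrt_nonneg _)
  have hle : ∀ x ∈ Ioi y, gaussianPDFReal 0 1 x ≤
      ((Real.sqrt (2*Real.pi))⁻¹ / y) * (x * Real.exp (-x^2/2)) := by
    intro x hx
    rw [gpdf_eq]
    have hx1 : 1 ≤ x / y := (one_le_div hy).mpr (mem_Ioi.mp hx).le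
    have he : 0 < Real.exp (-x^2/2) := Real.exp_pos _
    have heq : ((Real.sqrt (2*Real.pi))⁻¹ / y) * (x * Real.exp (-x^2/2))
        = ((Real.sqrt (2*Real.pi))⁻¹ * Real.exp (-x^2/2)) * (x / y) := by ring
    rw [heq]
    exact le_mul_of_one_le_right (mul_nonneg hc he.le) hx1
  calc ∫ x in Ioi y, gaussianPDFReal 0 1 x
      ≤ ∫ x in Ioi y, ((Real.sqrt (2*Real.pi))⁻¹ / y) * (x * Real.exp (-x^2/2)) :=
        setIntegral_mono_on (integrable_gaussianPDFReal 0 1).integrableOn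
          (int_x_exp.integrableOn.const_mul _) measurableSet_Ioi hle
    _ = ((Real.sqrt (2*Real.pi))⁻¹ / y) * ∫ x in Ioi y, x * Real.exp (-x^2/2) :=
        integral_const_mul _ _
    _ = (Real.sqrt (2*Real.pi))⁻¹ * (Real.exp (-y^2/2) / y) := by
        rw [integral_x_exp]; ring

end AuxLemmas

set_option maxHeartbeats 1000000 in
/-- with `n ≥ 2` such that `4 n^{1/4}√(π log n) < n`, truncation level
`δₙ = 1/(4 n^{1/4}√(π log n))`, sample `X₁,…,Xₙ` with common CDF `F`, empirical CDF `F̂` and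
Winsorized empirical CDF `F̃`, then pointwise (for every realization `ω`) and for every `t` with
`F(t) ∈ (0,1)` and `|Φ⁻¹(F(t))| ≤ √(M log n)` one has
`|Φ⁻¹(F̃(t)) − Φ⁻¹(F(t))| < √(2(M+2) log n)`. -/
theorem stmt13 {Ω : Type*} [MeasurableSpace Ω] (P : Measure Ω) [IsProbabilityMeasure P]
    {n : ℕ} (hn : 2 ≤ n)
    (hδsmall : 4 * (n : ℝ) ^ ((1 : ℝ) / 4) * Real.sqrt (Real.pi * Real.log n) < n)
    (δ : ℝ) (hδ : δ = 1 / (4 * (n : ℝ) ^ ((1 : ℝ) / 4) * Real.sqrt (Real.pi * Real.log n)))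
    (X : Fin n → Ω → ℝ) (F : ℝ → ℝ)
    (hF : ∀ i t, (P {ω | X i ω ≤ t}).toReal = F t)
    (Fhat : Ω → ℝ → ℝ)
    (hFhat : ∀ ω t, Fhat ω t = (n : ℝ)⁻¹ * ∑ i, if X i ω ≤ t then (1 : ℝ) else 0)
    (Ftil : Ω → ℝ → ℝ)
    (hFtil : ∀ ω t, Ftil ω t =
      if Fhat ω t < δ then δ else if 1 - δ < Fhat ω t then 1 - δ else Fhat ω t)
    (M : ℝ) (hM : 0 < M) :
    ∀ ω : Ω, ∀ t : ℝ, F t ∈ Set.Ioo (0 : ℝ) 1 →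
      |stdNormalQuantile (F t)| ≤ Real.sqrt (M * Real.log n) →
      |stdNormalQuantile (Ftil ω t) - stdNormalQuantile (F t)| <
        Real.sqrt (2 * (M + 2) * Real.log n) := by
  intro ω t hFt hQle
  have hn2 : (2:ℝ) ≤ (n:ℝ) := by exact_mod_cast hn
  have hnpos : (0:ℝ) < (n:ℝ) := by linarith
  have hlog : 0 < Real.log n := Real.log_pos (by linarith)
  set s := Real.sqrt (Real.pi * Real.log n) with hs_def
  have hlog2 : (0.6931471803 : ℝ) < Real.log 2 := Real.log_two_gt_d9
  have hlogn2 : Real.log 2 ≤ Real.log n := Real.log_le_log (by norm_num) hn2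
  have hpil : 1 ≤ Real.pi * Real.log n := by nlinarith [Real.pi_gt_three]
  have hs1 : 1 ≤ s := by
    rw [hs_def, show (1:ℝ) = Real.sqrt 1 from Real.sqrt_one.symm]
    exact Real.sqrt_le_sqrt hpil
  have hs0 : 0 < s := lt_of_lt_of_le one_pos hs1
  have hr : 0 < (n:ℝ) ^ ((1:ℝ)/4) := Real.rpow_pos_of_pos hnpos _
  have hD : 0 < 4 * (n:ℝ) ^ ((1:ℝ)/4) * s := by positivity
  have hδpos : 0 < δ := by rw [hδ]; positivity
  have hδlt : δ < 1/2 := by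
    rw [hδ, div_lt_div_iff₀ hD (by norm_num)]
    have hr1 : 1 ≤ (n:ℝ) ^ ((1:ℝ)/4) := Real.one_le_rpow (by linarith) (by norm_num)
    nlinarith
  set y := Real.sqrt (2 * Real.log n) with hy_def
  have hy : 0 < y := Real.sqrt_pos.mpr (by linarith)
  have hy2 : y^2 = 2 * Real.log n := Real.sq_sqrt (by linarith)
  -- tail estimate
  have htail : 1 - stdNormalCDF y < δ := by
    have h1 := tail_bound hy
    have hE : Real.exp (-y^2/2) = (n:ℝ)⁻¹ := by
      rw [hy2, show -(2*Real.log n)/2 = -Real.log n by ring, Real.exp_neg, Real.exp_log hnpos]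
    have hsqrt : Real.sqrt (2*Real.pi) * y = 2 * s := by
      rw [hy_def, hs_def, ← Real.sqrt_mul (by positivity) (2*Real.log n),
        show 2*Real.pi*(2*Real.log n) = 4 * (Real.pi * Real.log n) by ring,
        Real.sqrt_mul (by norm_num) _,
        show Real.sqrt 4 = 2 by rw [show (4:ℝ) = 2^2 by norm_num, Real.sqrt_sq (by norm_num)]]
    have h2 : (Real.sqrt (2*Real.pi))⁻¹ * (Real.exp (-y^2/2)/y) = 1/((n:ℝ) * (2*s)) := by
      have e1 : (Real.sqrt (2*Real.pi))⁻¹ * ((n:ℝ)⁻¹ * y⁻¹)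
          = ((n:ℝ) * (Real.sqrt (2*Real.pi) * y))⁻¹ := by
        rw [mul_inv, mul_inv]; ring
      rw [hE, div_eq_mul_inv, e1, hsqrt, one_div]
    have h3 : 1/((n:ℝ) * (2*s)) < δ := by
      rw [hδ, div_lt_div_iff₀ (by positivity) hD]
      nlinarith
    linarith
  have hΦny : stdNormalCDF (-y) < δ := by rw [snc_neg]; linarith
  -- Ftil bounds
  have hp : δ ≤ Ftil ω t ∧ Ftil ω t ≤ 1 - δ := by
    rw [hFtil]
    split_ifs with h1 h2
    · exact ⟨le_rfl, by linarith⟩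
    · exact ⟨by linarith, le_rfl⟩
    · push_neg at h1 h2; exact ⟨h1, h2⟩
  have hp0 : 0 < Ftil ω t := lt_of_lt_of_le hδpos hp.1
  have hp1 : Ftil ω t < 1 := lt_of_le_of_lt hp.2 (by linarith)
  obtain ⟨x1, hx1⟩ := snc_surj hp0 hp1
  have hq1 : stdNormalQuantile (Ftil ω t) = x1 := by rw [← hx1, snq_cdf]
  have hx1y : x1 < y := by
    by_contra h
    push_neg at h
    have := snc_strictMono.monotone h
    rw [hx1] at this
    linarith [hp.2]
  have hx1y' : -y < x1 := by
    by_contra h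
    push_neg at h
    have := snc_strictMono.monotone h
    rw [hx1] at this
    linarith [hp.1]
  have habs : |stdNormalQuantile (Ftil ω t)| < y := by
    rw [hq1, abs_lt]; exact ⟨hx1y', hx1y⟩
  -- final arithmetic
  have hsum : y + Real.sqrt (M * Real.log n) ≤ Real.sqrt (2*(M+2) * Real.log n) := by
    have h2 : y = Real.sqrt 2 * Real.sqrt (Real.log n) := by
      rw [hy_def, Real.sqrt_mul (by norm_num)]
    have hM2 : Real.sqrt (M*Real.log n) = Real.sqrt M * Real.sqrt (Real.log n) :=
      Real.sqrt_mul hM.le _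
    have hT : Real.sqrt (2*(M+2)*Real.log n) = Real.sqrt (2*(M+2)) * Real.sqrt (Real.log n) :=
      Real.sqrt_mul (by linarith) _
    rw [h2, hM2, hT, ← add_mul]
    apply mul_le_mul_of_nonneg_right _ (Real.sqrt_nonneg _)
    have h2M : Real.sqrt 2 * Real.sqrt M = Real.sqrt (2*M) := (Real.sqrt_mul (by norm_num) M).symm
    have hb : Real.sqrt (2*M) ≤ (M+2)/2 := by
      rw [show (M+2)/2 = Real.sqrt (((M+2)/2)^2) from (Real.sqrt_sq (by linarith)).symm]
      apply Real.sqrt_le_sqrt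
      nlinarith [sq_nonneg (M-2)]
    have hq2 : Real.sqrt 2 ^ 2 = 2 := Real.sq_sqrt (by norm_num)
    have hqM : Real.sqrt M ^ 2 = M := Real.sq_sqrt hM.le
    have hle' : (Real.sqrt 2 + Real.sqrt M)^2 ≤ 2*(M+2) := by nlinarith
    calc Real.sqrt 2 + Real.sqrt M
        = Real.sqrt ((Real.sqrt 2 + Real.sqrt M)^2) := (Real.sqrt_sq (by positivity)).symm
      _ ≤ Real.sqrt (2*(M+2)) := Real.sqrt_le_sqrt hle'
  have htri : |stdNormalQuantile (Ftil ω t) - stdNormalQuantile (F t)| ≤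
      |stdNormalQuantile (Ftil ω t)| + |stdNormalQuantile (F t)| := by
    rw [sub_eq_add_neg]
    exact (abs_add_le _ _).trans (by rw [abs_neg])
  calc |stdNormalQuantile (Ftil ω t) - stdNormalQuantile (F t)|
      ≤ |stdNormalQuantile (Ftil ω t)| + |stdNormalQuantile (F t)| := htri
    _ < y + Real.sqrt (M * Real.log n) := by linarith
    _ ≤ Real.sqrt (2*(M+2) * Real.log n) := hsum
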